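/- There is C > 0 such that for all h > 0 and all ξ ∈ Ω_h: |E^tr_0(ξ) − (3/2)|2πξ|²| ≤ Ch²|ξ|⁴, |E^hex_−(ξ) − (3/4)|2πξ|²| ≤ Ch²|ξ|⁴, and consequently |E^hex_−(ξ) − E^tr_0(ξ)/2| ≤ Ch²|ξ|⁴. -/

import Mathlib

open MeasureTheory Complex Filter Topology Matrix
open scoped FourierTransform RealInnerProductSpace ComplexConjugate

noncomputable section

abbrev R2 : Type := EuclideanSpace ℝ (Fin 2)

def v2 (a b : ℝ) : R2 := WithLp.toLp 2 ![a, b]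

def he1 : R2 := v2 (1/2) (Real.sqrt 3 / 2)
def he2 : R2 := v2 (1/2) (-(Real.sqrt 3) / 2)
def he3 : R2 := v2 (-1) 0
def hf1 : R2 := v2 (3/2) (Real.sqrt 3 / 2)
def hf2 : R2 := v2 (3/2) (-(Real.sqrt 3) / 2)
def hf1' : R2 := v2 (1/3) (Real.sqrt 3 / 3)
def hf2' : R2 := v2 (1/3) (-(Real.sqrt 3) / 3)

/-- `φ_f(ξ) = exp(2πi h f·ξ)`. -/
def phase (h : ℝ) (f ξ : R2) : ℂ :=
  Complex.exp (2 * Real.pi * Complex.I * (h : ℂ) * ((⟪f, ξ⟫ : ℝ) : ℂ))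

/-- `α(ξ) = 1 + φ_{f₁}(ξ) + φ_{f₂}(ξ)`. -/
def alphaHex (h : ℝ) (ξ : R2) : ℂ := 1 + phase h hf1 ξ + phase h hf2 ξ

/-- `E^hex_−(ξ) = h⁻²(3 − |α(ξ)|)`. -/
def EhexM (h : ℝ) (ξ : R2) : ℝ := (3 - ‖alphaHex h ξ‖) / h ^ 2

/-- `E^tr_0(ξ) = h⁻²(6 − 2∑_{j=1}^3 cos(2πh e_j·ξ))`. -/
def Etr (h : ℝ) (ξ : R2) : ℝ :=
  (6 - 2 * (Real.cos (2 * Real.pi * h * ⟪he1, ξ⟫) + Real.cos (2 * Real.pi * h * ⟪he2, ξ⟫) +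
    Real.cos (2 * Real.pi * h * ⟪he3, ξ⟫))) / h ^ 2

/-- The dual lattice `Γ'_h = ℤ(h⁻¹f₁') + ℤ(h⁻¹f₂')`. -/
def GammaDual (h : ℝ) : Set R2 :=
  {v | ∃ n₁ n₂ : ℤ, v = h⁻¹ • ((n₁ : ℝ) • hf1' + (n₂ : ℝ) • hf2')}

/-- The first Brillouin zone `Ω_h`. -/
def Omegah (h : ℝ) : Set R2 := {ξ | ∀ f' ∈ GammaDual h, f' ≠ 0 → ‖ξ‖ ≤ ‖ξ - f'‖}


/-! Both symbols are built from sums `∑ (1 - cos tⱼ)` of phases `tⱼ = 2πh⟪gⱼ, ξ⟫`.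
Since `t²/2 - t⁴/24 ≤ 1 - cos t ≤ t²/2`, such a sum is `Q/2 + O(Q²)` with `Q = ∑ tⱼ²`,
and `Q` is an explicit multiple of `h²|2πξ|²`: the vectors `e₁, e₂, e₃`, and likewise
`f₁, f₂, f₁ - f₂`, form tight frames. For the hexagonal symbol, `|α|² = 9 - 2S` with `S`
the sum over `f₁, f₂, f₁ - f₂`, and `3 - √(9 - 2S) = S/3 + O(S²)`. -/

namespace Real

lemma sq_sub_pow_four_div_three_le_sin_sq (s : ℝ) : s ^ 2 - s ^ 4 / 3 ≤ sin s ^ 2 := by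
  wlog hs : 0 ≤ s generalizing s
  · simpa [show (-s) ^ 4 = s ^ 4 by ring] using this (-s) (by linarith)
  rcases le_total (s ^ 2) 3 with hs3 | hs3
  · have hcube : 0 ≤ s - s ^ 3 / 6 := by nlinarith
    have := pow_le_pow_left₀ hcube (sin_ge_sub_cube hs) 2
    nlinarith [pow_nonneg hs 6]
  · nlinarith [sq_nonneg (sin s)]

lemma sq_div_two_sub_pow_four_div_le_one_sub_cos (t : ℝ) :
    t ^ 2 / 2 - t ^ 4 / 24 ≤ 1 - cos t := by
  have := sq_sub_pow_four_div_three_le_sin_sq (t / 2)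
  rw [sin_sq_eq_half_sub, mul_div_cancel₀ t two_ne_zero] at this
  linarith

lemma one_sub_cos_le_sq_div_two (t : ℝ) : 1 - cos t ≤ t ^ 2 / 2 := by
  linarith [one_sub_sq_div_two_le_cos (x := t)]

end Real

lemma Finset.sum_one_sub_cos_le {ι : Type*} (s : Finset ι) (t : ι → ℝ) :
    ∑ i ∈ s, (1 - Real.cos (t i)) ≤ (∑ i ∈ s, t i ^ 2) / 2 := by
  rw [Finset.sum_div]
  exact Finset.sum_le_sum fun i _ ↦ Real.one_sub_cos_le_sq_div_two (t i)

lemma Finset.abs_sum_one_sub_cos_sub_le {ι : Type*} (s : Finset ι) (t : ι → ℝ) :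
    |∑ i ∈ s, (1 - Real.cos (t i)) - (∑ i ∈ s, t i ^ 2) / 2| ≤
      (∑ i ∈ s, t i ^ 2) ^ 2 / 24 := by
  have hquartic : ∑ i ∈ s, t i ^ 4 ≤ (∑ i ∈ s, t i ^ 2) ^ 2 := by
    simpa only [← pow_mul] using
      Finset.sum_sq_le_sq_sum_of_nonneg (f := fun i ↦ t i ^ 2) fun i _ ↦ sq_nonneg (t i)
  have hlower : (∑ i ∈ s, t i ^ 2) / 2 - (∑ i ∈ s, t i ^ 4) / 24 ≤
      ∑ i ∈ s, (1 - Real.cos (t i)) := by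
    rw [Finset.sum_div, Finset.sum_div, ← Finset.sum_sub_distrib]
    exact Finset.sum_le_sum fun i _ ↦ Real.sq_div_two_sub_pow_four_div_le_one_sub_cos (t i)
  rw [abs_le]
  constructor
  · linarith
  · linarith [s.sum_one_sub_cos_le t, sq_nonneg (∑ i ∈ s, t i ^ 2)]

/-- With `r = √(9 - 2S)` this reads `3 - r = S/3 + O(S²)`. -/
lemma abs_three_sub_sub_le {r : ℝ} (hr : 0 ≤ r) :
    |3 - r - (9 - r ^ 2) / 6| ≤ (9 - r ^ 2) ^ 2 / 54 := by
  have hsq : 3 - r - (9 - r ^ 2) / 6 = (3 - r) ^ 2 / 6 := by ring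
  have hfac : (9 - r ^ 2) ^ 2 / 54 = (3 - r) ^ 2 * (3 + r) ^ 2 / 54 := by ring
  rw [hsq, hfac, abs_of_nonneg (by positivity)]
  have : (9 : ℝ) ≤ (3 + r) ^ 2 := by nlinarith
  nlinarith [sq_nonneg (3 - r)]

open Complex in
lemma Complex.norm_sq_one_add_exp_add_exp (a b : ℝ) :
    ‖1 + exp (a * I) + exp (b * I)‖ ^ 2 =
      9 - 2 * ((1 - Real.cos a) + (1 - Real.cos b) + (1 - Real.cos (a - b))) := by
  rw [Complex.sq_norm, Complex.normSq_apply]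
  simp only [add_re, add_im, one_re, one_im, exp_ofReal_mul_I_re, exp_ofReal_mul_I_im]
  rw [Real.cos_sub]
  linear_combination Real.sin_sq_add_cos_sq a + Real.sin_sq_add_cos_sq b

lemma inner_v2 (a b : ℝ) (ξ : R2) : ⟪v2 a b, ξ⟫ = a * ξ 0 + b * ξ 1 := by
  simp [v2, PiLp.inner_apply, Fin.sum_univ_two, mul_comm]

lemma norm_sq_eq_sq_add_sq (ξ : R2) : ‖ξ‖ ^ 2 = ξ 0 ^ 2 + ξ 1 ^ 2 := by
  simp [EuclideanSpace.real_norm_sq_eq, Fin.sum_univ_two]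

lemma inner_he_sq_sum (ξ : R2) :
    ⟪he1, ξ⟫ ^ 2 + ⟪he2, ξ⟫ ^ 2 + ⟪he3, ξ⟫ ^ 2 = 3 / 2 * ‖ξ‖ ^ 2 := by
  have h3 : Real.sqrt 3 ^ 2 = 3 := Real.sq_sqrt (by norm_num)
  simp only [he1, he2, he3, inner_v2, norm_sq_eq_sq_add_sq]
  linear_combination (ξ 1 ^ 2 / 2) * h3

lemma inner_hf_sq_sum (ξ : R2) :
    ⟪hf1, ξ⟫ ^ 2 + ⟪hf2, ξ⟫ ^ 2 + (⟪hf1, ξ⟫ - ⟪hf2, ξ⟫) ^ 2 = 9 / 2 * ‖ξ‖ ^ 2 := by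
  have h3 : Real.sqrt 3 ^ 2 = 3 := Real.sq_sqrt (by norm_num)
  simp only [hf1, hf2, inner_v2, norm_sq_eq_sq_add_sq]
  linear_combination (3 * ξ 1 ^ 2 / 2) * h3

lemma phase_eq_exp (h : ℝ) (f ξ : R2) :
    phase h f ξ = Complex.exp ((2 * Real.pi * h * ⟪f, ξ⟫ : ℝ) * Complex.I) := by
  rw [phase]
  push_cast
  ring_nf

lemma abs_Etr_sub_le {h : ℝ} (hh : h ≠ 0) (ξ : R2) :
    |Etr h ξ - 3 / 2 * (2 * Real.pi * ‖ξ‖) ^ 2| ≤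
      3 / 16 * h ^ 2 * (2 * Real.pi * ‖ξ‖) ^ 4 := by
  set t : Fin 3 → ℝ := ![2 * Real.pi * h * ⟪he1, ξ⟫, 2 * Real.pi * h * ⟪he2, ξ⟫,
    2 * Real.pi * h * ⟪he3, ξ⟫]
  have hQ : ∑ j, t j ^ 2 = 3 / 2 * h ^ 2 * (2 * Real.pi * ‖ξ‖) ^ 2 := by
    simp only [t, Fin.sum_univ_three, Matrix.cons_val]
    linear_combination (2 * Real.pi * h) ^ 2 * inner_he_sq_sum ξ
  have hE : Etr h ξ - 3 / 2 * (2 * Real.pi * ‖ξ‖) ^ 2 =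
      2 * (∑ j, (1 - Real.cos (t j)) - (∑ j, t j ^ 2) / 2) / h ^ 2 := by
    rw [hQ, Etr]
    simp only [t, Fin.sum_univ_three, Matrix.cons_val]
    field_simp
    ring
  calc |Etr h ξ - 3 / 2 * (2 * Real.pi * ‖ξ‖) ^ 2|
      = 2 * |∑ j, (1 - Real.cos (t j)) - (∑ j, t j ^ 2) / 2| / h ^ 2 := by
        rw [hE, abs_div, abs_mul, abs_two, abs_of_nonneg (sq_nonneg h)]
    _ ≤ 2 * ((∑ j, t j ^ 2) ^ 2 / 24) / h ^ 2 := by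
        gcongr; exact Finset.abs_sum_one_sub_cos_sub_le _ t
    _ = 3 / 16 * h ^ 2 * (2 * Real.pi * ‖ξ‖) ^ 4 := by
        rw [hQ]; field_simp; ring

lemma abs_EhexM_sub_le {h : ℝ} (hh : h ≠ 0) (ξ : R2) :
    |EhexM h ξ - 3 / 4 * (2 * Real.pi * ‖ξ‖) ^ 2| ≤
      21 / 32 * h ^ 2 * (2 * Real.pi * ‖ξ‖) ^ 4 := by
  set a := 2 * Real.pi * h * ⟪hf1, ξ⟫
  set b := 2 * Real.pi * h * ⟪hf2, ξ⟫
  set t : Fin 3 → ℝ := ![a, b, a - b]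
  set S := ∑ j, (1 - Real.cos (t j))
  set Q := ∑ j, t j ^ 2
  set r := ‖alphaHex h ξ‖
  have hQ : Q = 9 / 2 * h ^ 2 * (2 * Real.pi * ‖ξ‖) ^ 2 := by
    simp only [Q, t, a, b, Fin.sum_univ_three, Matrix.cons_val]
    linear_combination (2 * Real.pi * h) ^ 2 * inner_hf_sq_sum ξ
  have hr : r ^ 2 = 9 - 2 * S := by
    simp only [r, alphaHex, phase_eq_exp, Complex.norm_sq_one_add_exp_add_exp, S, t, a, b,
      Fin.sum_univ_three, Matrix.cons_val]
  have hS : 0 ≤ S ∧ S ≤ Q / 2 :=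
    ⟨Finset.sum_nonneg fun j _ ↦ sub_nonneg.2 (Real.cos_le_one _),
      Finset.sum_one_sub_cos_le _ t⟩
  have hE : EhexM h ξ - 3 / 4 * (2 * Real.pi * ‖ξ‖) ^ 2 =
      ((3 - r - (9 - r ^ 2) / 6) + (S - Q / 2) / 3) / h ^ 2 := by
    rw [EhexM, hr, hQ]
    field_simp
    ring
  calc |EhexM h ξ - 3 / 4 * (2 * Real.pi * ‖ξ‖) ^ 2|
      ≤ (|3 - r - (9 - r ^ 2) / 6| + |(S - Q / 2) / 3|) / h ^ 2 := by
        rw [hE, abs_div, abs_of_nonneg (sq_nonneg h)]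
        gcongr
        exact abs_add_le _ _
    _ ≤ ((9 - r ^ 2) ^ 2 / 54 + Q ^ 2 / 24 / 3) / h ^ 2 := by
        rw [abs_div (S - Q / 2), abs_of_pos (three_pos : (0 : ℝ) < 3)]
        gcongr
        · exact abs_three_sub_sub_le (norm_nonneg _)
        · exact Finset.abs_sum_one_sub_cos_sub_le _ t
    _ ≤ ((Q / 2) ^ 2 * 4 / 54 + Q ^ 2 / 24 / 3) / h ^ 2 := by
        rw [hr, show (9 - (9 - 2 * S)) ^ 2 = S ^ 2 * 4 by ring]
        gcongr
        exacts [hS.1, hS.2]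
    _ = 21 / 32 * h ^ 2 * (2 * Real.pi * ‖ξ‖) ^ 4 := by
        rw [hQ]; field_simp; ring

/-- Taylor expansions of the symbols: `E^tr_0(ξ) = (3/2)|2πξ|² + O(h²|ξ|⁴)`,
`E^hex_−(ξ) = (3/4)|2πξ|² + O(h²|ξ|⁴)`, and `E^hex_−(ξ) − E^tr_0(ξ)/2 = O(h²|ξ|⁴)` on `Ω_h`. -/
theorem hexagonal_symbol_expansions :
    ∃ C > (0 : ℝ), ∀ h : ℝ, 0 < h → ∀ ξ ∈ Omegah h,
      |Etr h ξ - 3 / 2 * (2 * Real.pi * ‖ξ‖) ^ 2| ≤ C * h ^ 2 * ‖ξ‖ ^ 4 ∧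
      |EhexM h ξ - 3 / 4 * (2 * Real.pi * ‖ξ‖) ^ 2| ≤ C * h ^ 2 * ‖ξ‖ ^ 4 ∧
      |EhexM h ξ - Etr h ξ / 2| ≤ C * h ^ 2 * ‖ξ‖ ^ 4 := by
  refine ⟨(2 * Real.pi) ^ 4, by positivity, fun h hh ξ _ ↦ ?_⟩
  set y := 2 * Real.pi * ‖ξ‖
  have htr : |Etr h ξ - 3 / 2 * y ^ 2| ≤ 3 / 16 * h ^ 2 * y ^ 4 := abs_Etr_sub_le hh.ne' ξ
  have hhex : |EhexM h ξ - 3 / 4 * y ^ 2| ≤ 21 / 32 * h ^ 2 * y ^ 4 := abs_EhexM_sub_le hh.ne' ξ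
  have hdiff : |EhexM h ξ - Etr h ξ / 2| ≤
      |EhexM h ξ - 3 / 4 * y ^ 2| + |Etr h ξ - 3 / 2 * y ^ 2| / 2 :=
    calc |EhexM h ξ - Etr h ξ / 2|
        = |(EhexM h ξ - 3 / 4 * y ^ 2) - (Etr h ξ - 3 / 2 * y ^ 2) / 2| := by congr 1; ring
      _ ≤ |EhexM h ξ - 3 / 4 * y ^ 2| + |(Etr h ξ - 3 / 2 * y ^ 2) / 2| := abs_sub _ _
      _ = |EhexM h ξ - 3 / 4 * y ^ 2| + |Etr h ξ - 3 / 2 * y ^ 2| / 2 := by rw [abs_div, abs_two]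
  have hC : (2 * Real.pi) ^ 4 * h ^ 2 * ‖ξ‖ ^ 4 = h ^ 2 * y ^ 4 := by ring
  have hnonneg : 0 ≤ h ^ 2 * y ^ 4 := by positivity
  rw [hC]
  exact ⟨by linarith, by linarith, by linarith⟩

end
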